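/- (Irreducibility) For the randomized Collatz chain, for every pair of positive odd integers x and y, if the chain is started at X_0 = x then P( there exists n ≥ 1 with X_n = y ) > 0. -/

import Mathlib

/-! For odd `x > 1` the noise `v ≡ -3x (mod 8)` makes `3x + v < 8x` divisible by `8`, so the chain
can be driven down to `1`; conversely every odd `y > 1` has the odd predecessor `(2y - v) / 3 < y`
for the `v ∈ {1, 3, 5}` with `v ≡ 2y (mod 3)`, so `1` leads back up to `y`. Hence a nonempty
noise word drives the chain from `x` to `y`, and by independence the noise follows this word with
probability `4 ^ (-length) > 0`. -/

open MeasureTheory ProbabilityTheory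

namespace RandomCollatz

def collatzStep (x v : ℕ) : ℕ := (3 * x + v) / 2 ^ padicValNat 2 (3 * x + v)

def IsNoise (v : ℕ) : Prop := v = 1 ∨ v = 3 ∨ v = 5 ∨ v = 7

lemma collatzStep_eq_of_eq_two_pow_mul {x v y d : ℕ} (hy : Odd y) (h : 3 * x + v = 2 ^ d * y) :
    collatzStep x v = y := by
  have hval : padicValNat 2 (3 * x + v) = d := by
    rw [h, padicValNat.mul (pow_ne_zero _ two_ne_zero) (by rintro rfl; simp at hy),
      padicValNat.prime_pow, padicValNat.eq_zero_of_not_dvd hy.not_two_dvd_nat, add_zero]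
  rw [collatzStep, hval, h, Nat.mul_div_cancel_left _ (pow_pos two_pos d)]

lemma collatzStep_one_one : collatzStep 1 1 = 1 :=
  collatzStep_eq_of_eq_two_pow_mul (d := 2) odd_one rfl

lemma exists_collatzStep_lt {x : ℕ} (hx : Odd x) (h : 1 < x) :
    ∃ v, IsNoise v ∧ Odd (collatzStep x v) ∧ collatzStep x v < x := by
  have hx2 := Nat.odd_iff.mp hx
  set v := 8 - 3 * x % 8
  obtain ⟨d, y, hy, hxy⟩ := Nat.exists_eq_two_pow_mul_odd (n := 3 * x + v) (by omega)
  have h8 : 2 ^ 3 ∣ 2 ^ d := by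
    refine (Nat.Coprime.pow_left 3 (Nat.coprime_two_left.mpr hy)).dvd_of_dvd_mul_right ?_
    exact hxy ▸ (by omega : 8 ∣ 3 * x + v)
  have h8y : 8 * y ≤ 2 ^ d * y := Nat.mul_le_mul_right y (Nat.le_of_dvd (by positivity) h8)
  refine ⟨v, by unfold IsNoise; omega, ?_⟩
  rw [collatzStep_eq_of_eq_two_pow_mul hy hxy]
  exact ⟨hy, by omega⟩

lemma exists_collatzStep_eq {y : ℕ} (hy : Odd y) (h : 1 < y) :
    ∃ x v, Odd x ∧ x < y ∧ IsNoise v ∧ collatzStep x v = y := by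
  have hy2 := Nat.odd_iff.mp hy
  obtain ⟨v, hv, hv3⟩ : ∃ v, (v = 1 ∨ v = 3 ∨ v = 5) ∧ 3 ∣ 2 * y - v := by
    rcases (by omega : y % 3 = 0 ∨ y % 3 = 1 ∨ y % 3 = 2) with h3 | h3 | h3
    exacts [⟨3, by omega, by omega⟩, ⟨5, by omega, by omega⟩, ⟨1, by omega, by omega⟩]
  refine ⟨(2 * y - v) / 3, v, Nat.odd_iff.mpr (by omega), by omega,
    by unfold IsNoise; omega, ?_⟩
  exact collatzStep_eq_of_eq_two_pow_mul (d := 1) hy (by omega)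

lemma exists_foldl_collatzStep_eq_one {x : ℕ} (hx : Odd x) :
    ∃ s : List ℕ, (∀ v ∈ s, IsNoise v) ∧ s.foldl collatzStep x = 1 := by
  induction x using Nat.strong_induction_on with
  | _ x ih =>
    rcases (by obtain ⟨k, rfl⟩ := hx; omega : x = 1 ∨ 1 < x) with rfl | h
    · exact ⟨[], by simp, rfl⟩
    obtain ⟨v, hv, hodd, hlt⟩ := exists_collatzStep_lt hx h
    obtain ⟨s, hs, hrun⟩ := ih _ hlt hodd
    exact ⟨v :: s, List.forall_mem_cons.mpr ⟨hv, hs⟩, hrun⟩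

lemma exists_foldl_collatzStep_one_eq {y : ℕ} (hy : Odd y) :
    ∃ s : List ℕ, s ≠ [] ∧ (∀ v ∈ s, IsNoise v) ∧ s.foldl collatzStep 1 = y := by
  induction y using Nat.strong_induction_on with
  | _ y ih =>
    rcases (by obtain ⟨k, rfl⟩ := hy; omega : y = 1 ∨ 1 < y) with rfl | h
    · exact ⟨[1], by simp, by simp [IsNoise], collatzStep_one_one⟩
    obtain ⟨x, v, hx, hlt, hv, hstep⟩ := exists_collatzStep_eq hy h
    obtain ⟨s, -, hs, hrun⟩ := ih x hlt hx
    refine ⟨s ++ [v], by simp, by simpa [or_imp, forall_and, hv] using hs, ?_⟩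
    rw [List.foldl_concat, hrun, hstep]

lemma exists_foldl_collatzStep_eq {x y : ℕ} (hx : Odd x) (hy : Odd y) :
    ∃ s : List ℕ, s ≠ [] ∧ (∀ v ∈ s, IsNoise v) ∧ s.foldl collatzStep x = y := by
  obtain ⟨s, hs, hs1⟩ := exists_foldl_collatzStep_eq_one hx
  obtain ⟨t, ht_ne, ht, ht1⟩ := exists_foldl_collatzStep_one_eq hy
  refine ⟨s ++ t, by simp [ht_ne], ?_, by rw [List.foldl_append, hs1, ht1]⟩
  simpa [or_imp, forall_and] using ⟨hs, ht⟩

end RandomCollatz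

section Chain

variable {Ω α β : Type*}

lemma eq_foldl_ofFn {X : ℕ → Ω → α} {ξ : ℕ → Ω → β} {f : α → β → α} {x : α}
    (hX0 : ∀ ω, X 0 ω = x) (hXrec : ∀ n ω, X (n + 1) ω = f (X n ω) (ξ (n + 1) ω))
    (n : ℕ) (ω : Ω) :
    X n ω = (List.ofFn fun i : Fin n => ξ (i + 1) ω).foldl f x := by
  induction n with
  | zero => simp [hX0]
  | succ n ih => rw [List.ofFn_succ', List.concat_eq_append, List.foldl_concat, hXrec, ih]; rfl

lemma ProbabilityTheory.iIndepFun.measure_forall_eq_getElem_ne_zero [MeasurableSpace Ω]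
    [MeasurableSpace β] [MeasurableSingletonClass β] {μ : Measure Ω} {ξ : ℕ → Ω → β}
    (hξ : iIndepFun ξ μ)
    (s : List β) (hs : ∀ i : Fin s.length, μ {ω | ξ i ω = s[i]} ≠ 0) :
    μ {ω | ∀ i : Fin s.length, ξ i ω = s[i]} ≠ 0 := by
  have hprod := (hξ.precomp Fin.val_injective).measure_inter_preimage_eq_mul Finset.univ
    (sets := fun i : Fin s.length => {s[i]}) (fun _ _ => measurableSet_singleton _)
  simp only [Finset.mem_univ, Set.iInter_true] at hprod
  have hset :
      {ω | ∀ i : Fin s.length, ξ i ω = s[i]} = ⋂ i : Fin s.length, ξ i ⁻¹' {s[i]} := by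
    ext; simp
  rw [hset, hprod]
  exact Finset.prod_ne_zero_iff.mpr fun i _ => hs i

end Chain

open RandomCollatz in
theorem stmt_17_general
    {Ω : Type*} [MeasurableSpace Ω] (μ : MeasureTheory.Measure Ω)
    (ξ : ℕ → Ω → ℕ)
    (hξindep : ProbabilityTheory.iIndepFun ξ μ)
    (hξdist : ∀ n, μ {ω | ξ n ω = 1} = 1/4 ∧ μ {ω | ξ n ω = 3} = 1/4 ∧
      μ {ω | ξ n ω = 5} = 1/4 ∧ μ {ω | ξ n ω = 7} = 1/4)
    (x : ℕ) (hx : Odd x)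
    (y : ℕ) (hy : Odd y)
    (X : ℕ → Ω → ℕ)
    (hX0 : ∀ ω, X 0 ω = x)
    (hXrec : ∀ n ω, X (n + 1) ω =
      (3 * X n ω + ξ (n + 1) ω) / 2 ^ padicValNat 2 (3 * X n ω + ξ (n + 1) ω)) :
    0 < μ {ω | ∃ n, 1 ≤ n ∧ X n ω = y} := by
  obtain ⟨s, hs_ne, hs_noise, hs_run⟩ := exists_foldl_collatzStep_eq hx hy
  have hnoise_pos : ∀ n v, IsNoise v → μ {ω | ξ n ω = v} ≠ 0 := by
    rintro n v (rfl | rfl | rfl | rfl) <;> simp [hξdist n]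
  have hE := (hξindep.precomp Nat.succ_injective).measure_forall_eq_getElem_ne_zero s
    fun i => hnoise_pos _ _ (hs_noise _ (List.getElem_mem _))
  refine (pos_iff_ne_zero.mpr hE).trans_le (measure_mono fun ω hω => ?_)
  refine ⟨s.length, List.length_pos_iff.mpr hs_ne, ?_⟩
  have hword : (List.ofFn fun i : Fin s.length => ξ (i + 1) ω) = s :=
    List.ext_getElem (by simp) fun i _ _ => by simpa using hω ⟨i, by simpa⟩
  rw [eq_foldl_ofFn (f := collatzStep) hX0 hXrec, hword, hs_run]

/-- (Irreducibility) For the randomized Collatz chain started at a positive odd integer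
`x`, for every positive odd integer `y` one has `P(∃ n ≥ 1, Xₙ = y) > 0`. -/
theorem stmt_17
    {Ω : Type*} [MeasurableSpace Ω] (μ : MeasureTheory.Measure Ω)
    [MeasureTheory.IsProbabilityMeasure μ]
    (ξ : ℕ → Ω → ℕ)
    (hξval : ∀ n ω, ξ n ω = 1 ∨ ξ n ω = 3 ∨ ξ n ω = 5 ∨ ξ n ω = 7)
    (hξmeas : ∀ n, Measurable (ξ n))
    (hξindep : ProbabilityTheory.iIndepFun ξ μ)
    (hξdist : ∀ n, μ {ω | ξ n ω = 1} = 1/4 ∧ μ {ω | ξ n ω = 3} = 1/4 ∧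
      μ {ω | ξ n ω = 5} = 1/4 ∧ μ {ω | ξ n ω = 7} = 1/4)
    (x : ℕ) (hx : Odd x) (hxpos : 0 < x)
    (y : ℕ) (hy : Odd y) (hypos : 0 < y)
    (X : ℕ → Ω → ℕ)
    (hX0 : ∀ ω, X 0 ω = x)
    (hXrec : ∀ n ω, X (n + 1) ω =
      (3 * X n ω + ξ (n + 1) ω) / 2 ^ padicValNat 2 (3 * X n ω + ξ (n + 1) ω)) :
    0 < μ {ω | ∃ n, 1 ≤ n ∧ X n ω = y} :=
  stmt_17_general μ ξ hξindep hξdist x hx y hy X hX0 hXrec
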